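/- Let L be a factorial and almost prolongable language over a finite alphabet with L_n nonempty for every n, and suppose there exists a real α ≥ 1 with p(n)/n^α → 1 as n → ∞. Then lim_{n→∞} p(n+1)/p(n) = 1 and lim_{n→∞} r(n)/p(n) = 1. (Corollary 2.5 of the paper, stated via the paper's combinatorial criterion for convergence of the Rauzy digraphs to the directed line.) -/

import Mathlib

open Filter Topology

variable {A : Type*}

/-- The set of words of `L` of length `n`. -/
def Ln (L : Set (List A)) (n : ℕ) : Set (List A) := {w | w ∈ L ∧ w.length = n}

/-- The complexity function `p n = |L_n|`. -/
noncomputable def cplx (L : Set (List A)) (n : ℕ) : ℕ := Nat.card (Ln L n)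

/-- A language is factorial if it is closed under taking contiguous subwords. -/
def IsFactorial (L : Set (List A)) : Prop := ∀ u v : List A, u ∈ L → v <:+: u → v ∈ L

/-- `w` is left-prolongable in `L`. -/
def LeftProlongable (L : Set (List A)) (w : List A) : Prop := ∃ a : A, (a :: w) ∈ L

/-- `w` is right-prolongable in `L`. -/
def RightProlongable (L : Set (List A)) (w : List A) : Prop := ∃ b : A, (w ++ [b]) ∈ L

/-- `e_l(n)`: the number of words of length `n` in `L` that are not left-prolongable. -/
noncomputable def eL (L : Set (List A)) (n : ℕ) : ℕ :=
  Nat.card {w : List A | w ∈ Ln L n ∧ ¬ LeftProlongable L w}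

/-- `e_r(n)`: the number of words of length `n` in `L` that are not right-prolongable. -/
noncomputable def eR (L : Set (List A)) (n : ℕ) : ℕ :=
  Nat.card {w : List A | w ∈ Ln L n ∧ ¬ RightProlongable L w}

/-- `L` is almost prolongable: `e_l(n)/p(n) → 0` and `e_r(n)/p(n) → 0`. -/
def AlmostProlongable (L : Set (List A)) : Prop :=
  Tendsto (fun n => (eL L n : ℝ) / (cplx L n : ℝ)) atTop (𝓝 0) ∧
  Tendsto (fun n => (eR L n : ℝ) / (cplx L n : ℝ)) atTop (𝓝 0)

/-- `r(n)`: words of length `n` having exactly one left and exactly one right prolongation. -/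
noncomputable def rBoth (L : Set (List A)) (n : ℕ) : ℕ :=
  Nat.card {w : List A | w ∈ Ln L n ∧ (∃! a : A, (a :: w) ∈ L) ∧ (∃! b : A, (w ++ [b]) ∈ L)}

/-!
A word of length `n` without a unique right extension is either not right-prolongable or has
two distinct right extensions, and distinct extensions are distinct words of length `n + 1`.
Hence there are at most `p (n + 1) - p n + 2 e_r n` such words, and, reversing the language,
at most `p (n + 1) - p n + 2 e_l n` words without a unique left extension. So
`1 - r n / p n ≤ 2 (p (n + 1) / p n - 1 + e_l n / p n + e_r n / p n)`, which tends to `0`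
since `p n ~ n ^ α` forces `p (n + 1) / p n → 1`.
-/

lemma exists_ne_of_not_existsUnique {α : Type*} {p : α → Prop} (h : ∃ x, p x)
    (hu : ¬∃! x, p x) (y : α) : ∃ x, p x ∧ x ≠ y := by
  by_contra! hc
  obtain ⟨x, hx⟩ := h
  exact hu ⟨y, hc x hx ▸ hx, hc⟩

noncomputable def nonUniqueRight (L : Set (List A)) (n : ℕ) : ℕ :=
  Nat.card {w : List A | w ∈ Ln L n ∧ ¬∃! b : A, (w ++ [b]) ∈ L}

noncomputable def nonUniqueLeft (L : Set (List A)) (n : ℕ) : ℕ :=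
  Nat.card {w : List A | w ∈ Ln L n ∧ ¬∃! a : A, (a :: w) ∈ L}

section Reverse

variable (L : Set (List A)) (n : ℕ)

lemma card_preimage_reverse (s : Set (List A)) : Nat.card (List.reverse ⁻¹' s) = Nat.card s :=
  Nat.card_preimage_of_injective List.reverse_injective (by simp [List.reverse_surjective.range_eq])

lemma cplx_reverse : cplx (List.reverse ⁻¹' L) n = cplx L n := by
  rw [cplx, cplx, ← card_preimage_reverse]
  congr! 2
  ext w
  simp [Ln]

lemma eR_reverse : eR (List.reverse ⁻¹' L) n = eL L n := by
  rw [eR, eL, ← card_preimage_reverse]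
  congr! 2
  ext w
  simp [Ln, LeftProlongable, RightProlongable]

lemma nonUniqueRight_reverse : nonUniqueRight (List.reverse ⁻¹' L) n = nonUniqueLeft L n := by
  rw [nonUniqueRight, nonUniqueLeft, ← card_preimage_reverse]
  congr! 2
  ext w
  simp [Ln]

end Reverse

section Counting

variable [Finite A] (L : Set (List A)) (n : ℕ)

lemma Ln_finite : (Ln L n).Finite :=
  (List.finite_length_eq A n).subset fun _ hw => hw.2

instance (P : List A → Prop) : Finite {w : List A | w ∈ Ln L n ∧ P w} :=
  ((Ln_finite L n).subset fun _ hw => hw.1).to_subtype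

lemma cplx_eq_eR_add :
    cplx L n = eR L n + Nat.card {w : List A | w ∈ Ln L n ∧ RightProlongable L w} := by
  simp only [cplx, eR, Nat.card_coe_set_eq]
  rw [add_comm]
  exact (Set.ncard_inter_add_ncard_sdiff_eq_ncard (Ln L n) {w | RightProlongable L w}
    (Ln_finite L n)).symm

lemma nonUniqueRight_le :
    nonUniqueRight L n ≤ eR L n +
      Nat.card {w : List A | w ∈ Ln L n ∧ RightProlongable L w ∧ ¬∃! b : A, (w ++ [b]) ∈ L} := by
  simp only [nonUniqueRight, eR, Nat.card_coe_set_eq]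
  refine (Set.ncard_le_ncard ?_).trans (Set.ncard_union_le _ _)
  rintro w ⟨hw, hu⟩
  by_cases hr : RightProlongable L w
  exacts [Or.inr ⟨hw, hr, hu⟩, Or.inl ⟨hw, hr⟩]

lemma card_rightProlongable_add_card_not_unique_le :
    Nat.card {w : List A | w ∈ Ln L n ∧ RightProlongable L w} +
      Nat.card {w : List A | w ∈ Ln L n ∧ RightProlongable L w ∧ ¬∃! b : A, (w ++ [b]) ∈ L}
      ≤ cplx L (n + 1) := by
  have := (Ln_finite L (n + 1)).to_subtype
  rw [← Nat.card_sum]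
  let second (w : ↥{w : List A | w ∈ Ln L n ∧ RightProlongable L w ∧ ¬∃! b : A, (w ++ [b]) ∈ L}) :=
    exists_ne_of_not_existsUnique w.2.2.1 w.2.2.2 w.2.2.1.choose
  refine Nat.card_le_card_of_injective
    (Sum.elim (fun w => ⟨w.1 ++ [w.2.2.choose], w.2.2.choose_spec, by simp [w.2.1.2]⟩)
      (fun w => ⟨w.1 ++ [(second w).choose], (second w).choose_spec.1, by simp [w.2.1.2]⟩)) ?_
  rintro (⟨w, hw⟩ | ⟨w, hw⟩) (⟨v, hv⟩ | ⟨v, hv⟩) h <;>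
    obtain ⟨rfl, hb⟩ := List.append_inj' (congrArg Subtype.val h) rfl <;>
    simp only [List.cons.injEq, and_true] at hb
  · rfl
  · exact absurd hb.symm (second ⟨w, hv⟩).choose_spec.2
  · exact absurd hb (second ⟨w, hw⟩).choose_spec.2
  · rfl

lemma nonUniqueRight_add_cplx_le :
    nonUniqueRight L n + cplx L n ≤ cplx L (n + 1) + 2 * eR L n := by
  have := nonUniqueRight_le L n
  have := cplx_eq_eR_add L n
  have := card_rightProlongable_add_card_not_unique_le L n
  omega

lemma nonUniqueLeft_add_cplx_le :
    nonUniqueLeft L n + cplx L n ≤ cplx L (n + 1) + 2 * eL L n := by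
  simpa only [nonUniqueRight_reverse, cplx_reverse, eR_reverse] using
    nonUniqueRight_add_cplx_le (List.reverse ⁻¹' L) n

lemma cplx_le_rBoth_add_nonUnique :
    cplx L n ≤ rBoth L n + nonUniqueLeft L n + nonUniqueRight L n := by
  simp only [cplx, rBoth, nonUniqueLeft, nonUniqueRight, Nat.card_coe_set_eq]
  refine (Set.ncard_le_ncard ?_ ?_).trans ((Set.ncard_union_le _ _).trans
    (Nat.add_le_add_right (Set.ncard_union_le _ _) _))
  · intro w hw
    by_cases hl : ∃! a : A, (a :: w) ∈ L
    · by_cases hr : ∃! b : A, (w ++ [b]) ∈ L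
      exacts [Or.inl (Or.inl ⟨hw, hl, hr⟩), Or.inr ⟨hw, hr⟩]
    · exact Or.inl (Or.inr ⟨hw, hl⟩)
  · exact Set.toFinite _

lemma rBoth_le_cplx : rBoth L n ≤ cplx L n := by
  simp only [cplx, rBoth, Nat.card_coe_set_eq]
  exact Set.ncard_le_ncard (fun w hw => hw.1) (Ln_finite L n)

/-- That is, `p n - r n ≤ 2 (p (n + 1) - p n + e_l n + e_r n)`. -/
lemma three_mul_cplx_le :
    3 * cplx L n ≤ rBoth L n + 2 * (cplx L (n + 1) + eL L n + eR L n) := by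
  have := cplx_le_rBoth_add_nonUnique L n
  have := nonUniqueLeft_add_cplx_le L n
  have := nonUniqueRight_add_cplx_le L n
  omega

end Counting

lemma tendsto_succ_div_of_tendsto_div_rpow {f : ℕ → ℝ} {α : ℝ}
    (hf : Tendsto (fun n => f n / (n : ℝ) ^ α) atTop (𝓝 1)) :
    Tendsto (fun n => f (n + 1) / f n) atTop (𝓝 1) := by
  have hshift : Tendsto (fun n : ℕ => f (n + 1) / ((n : ℝ) + 1) ^ α) atTop (𝓝 1) := by
    simpa using (tendsto_add_atTop_iff_nat 1).2 hf
  have hpow : Tendsto (fun n : ℕ => ((n : ℝ) / (n + 1)) ^ α) atTop (𝓝 1) := by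
    simpa using (tendsto_natCast_div_add_atTop (1 : ℝ)).rpow_const (Or.inl one_ne_zero)
  have hquot := hshift.div (hf.mul hpow) (by norm_num)
  rw [mul_one, div_one] at hquot
  refine hquot.congr' ?_
  filter_upwards [eventually_gt_atTop 0, hf.eventually_ne one_ne_zero] with n hn hfn
  have : f n ≠ 0 := fun h => hfn (by simp [h])
  simp only [Pi.div_apply, Real.div_rpow (Nat.cast_nonneg n) (by positivity : (0 : ℝ) ≤ n + 1)]
  field_simp

lemma tendsto_rBoth_div_cplx [Finite A] {L : Set (List A)} (hap : AlmostProlongable L)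
    (hgrowth : Tendsto (fun n => (cplx L (n + 1) : ℝ) / cplx L n) atTop (𝓝 1)) :
    Tendsto (fun n => (rBoth L n : ℝ) / cplx L n) atTop (𝓝 1) := by
  have hlower : Tendsto (fun n => 3 - 2 * ((cplx L (n + 1) : ℝ) / cplx L n
      + eL L n / cplx L n + eR L n / cplx L n)) atTop (𝓝 1) := by
    convert (((hgrowth.add hap.1).add hap.2).const_mul 2).const_sub 3 using 2
    norm_num
  refine tendsto_of_tendsto_of_tendsto_of_le_of_le' hlower tendsto_const_nhds ?_
    (Eventually.of_forall fun n => div_le_one_of_le₀ (mod_cast rBoth_le_cplx L n) (by positivity))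
  filter_upwards [hgrowth.eventually_ne one_ne_zero] with n hn
  have hp : (0 : ℝ) < cplx L n := by
    refine lt_of_le_of_ne (by positivity) fun h => hn ?_
    simp [← h]
  have hcount : (3 : ℝ) * cplx L n ≤ rBoth L n + 2 * (cplx L (n + 1) + eL L n + eR L n) := by
    exact_mod_cast three_mul_cplx_le L n
  rw [le_div_iff₀ hp]
  field_simp
  linarith

theorem rauzy_convergence_of_asymptotic_polynomial_complexity_general {A : Type*} [Fintype A]
    (L : Set (List A)) (hap : AlmostProlongable L)
    (α : ℝ)
    (hasym : Tendsto (fun n => (cplx L n : ℝ) / (n : ℝ) ^ α) atTop (𝓝 1)) :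
    Tendsto (fun n => (cplx L (n + 1) : ℝ) / (cplx L n : ℝ)) atTop (𝓝 1) ∧
    Tendsto (fun n => (rBoth L n : ℝ) / (cplx L n : ℝ)) atTop (𝓝 1) := by
  have hgrowth := tendsto_succ_div_of_tendsto_div_rpow hasym
  exact ⟨hgrowth, tendsto_rBoth_div_cplx hap hgrowth⟩

theorem rauzy_convergence_of_asymptotic_polynomial_complexity {A : Type*} [Fintype A]
    (L : Set (List A)) (hfac : IsFactorial L) (hap : AlmostProlongable L)
    (hne : ∀ n : ℕ, (Ln L n).Nonempty)
    (α : ℝ) (hα : 1 ≤ α)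
    (hasym : Tendsto (fun n => (cplx L n : ℝ) / (n : ℝ) ^ α) atTop (𝓝 1)) :
    Tendsto (fun n => (cplx L (n + 1) : ℝ) / (cplx L n : ℝ)) atTop (𝓝 1) ∧
    Tendsto (fun n => (rBoth L n : ℝ) / (cplx L n : ℝ)) atTop (𝓝 1) :=
  rauzy_convergence_of_asymptotic_polynomial_complexity_general L hap α hasym
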